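/- arXiv:2512.07766 — 8 statements merged into one kernel-verified Lean document; each statement's English description precedes it below -/
import Mathlib

section
/- Let W be the weight matrix and θ the threshold vector of a Hopfield network on n neurons, let s be a state, and let u be a neuron whose asynchronous update changes its activation. Then the energy difference satisfies E(Up(s,u)) − E(s) = (s u − Up(s,u) u) · (net_u(s) − θ u), where net_u(s) = ∑_{v ≠ u} W u v · s v. -/
open Finset

noncomputable section

/-- The net input to neuron `u` in state `s`: `∑_{v ≠ u} W u v * s v`. -/
def netInput {n : ℕ} (W : Matrix (Fin n) (Fin n) ℝ) (s : Fin n → ℝ) (u : Fin n) : ℝ :=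
  ∑ v ∈ univ.filter (fun v => v ≠ u), W u v * s v

/-- Asynchronous update of the state `s` at neuron `u`. -/
def Up {n : ℕ} (W : Matrix (Fin n) (Fin n) ℝ) (θ : Fin n → ℝ) (s : Fin n → ℝ)
    (u : Fin n) : Fin n → ℝ :=
  Function.update s u (if θ u ≤ netInput W s u then 1 else -1)

/-- The energy of a state of a Hopfield network. -/
def energy {n : ℕ} (W : Matrix (Fin n) (Fin n) ℝ) (θ : Fin n → ℝ) (s : Fin n → ℝ) : ℝ :=
  -(1 / 2) * (∑ u, ∑ v ∈ univ.filter (fun v => v ≠ u), W u v * s u * s v)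
    + ∑ u, θ u * s u

/-!
Only the terms of the energy that involve neuron `u` change under the update. Since `W` is
symmetric, the pairs `(u, v)` and `(v, u)` contribute equally, so the quadratic part changes by
`2 (s' u - s u) net_u(s)`, which the factor `-1/2` turns into `(s u - s' u) net_u(s)`; the
threshold part changes by `θ u (s' u - s u)`.
-/

section QuadraticForm

variable {ι R : Type*} [Fintype ι] [DecidableEq ι] [CommRing R]

lemma sum_offDiag_eq_two_mul_add {W : Matrix ι ι R} (hW : W.IsSymm) (x : ι → R) (u : ι) :
    ∑ w, ∑ v ∈ univ.filter (fun v => v ≠ w), W w v * x w * x v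
      = 2 * x u * ∑ v ∈ univ.filter (fun v => v ≠ u), W u v * x v
        + ∑ w ∈ univ.erase u, ∑ v ∈ (univ.filter (fun v => v ≠ w)).erase u,
            W w v * x w * x v := by
  have split_column : ∀ w ∈ univ.erase u,
      ∑ v ∈ univ.filter (fun v => v ≠ w), W w v * x w * x v
        = W w u * x w * x u
          + ∑ v ∈ (univ.filter (fun v => v ≠ w)).erase u, W w v * x w * x v := fun w hw =>
    (add_sum_erase _ _ (mem_filter.mpr ⟨mem_univ u, (ne_of_mem_erase hw).symm⟩)).symm
  have column : ∑ w ∈ univ.erase u, W w u * x w * x u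
      = x u * ∑ v ∈ univ.filter (fun v => v ≠ u), W u v * x v := by
    rw [mul_sum, filter_ne']
    exact sum_congr rfl fun w _ => by rw [hW.apply u w]; ring
  have row : ∑ v ∈ univ.filter (fun v => v ≠ u), W u v * x u * x v
      = x u * ∑ v ∈ univ.filter (fun v => v ≠ u), W u v * x v := by
    rw [mul_sum]
    exact sum_congr rfl fun v _ => by ring
  rw [← sum_erase_add _ _ (mem_univ u), sum_congr rfl split_column, sum_add_distrib, column, row]
  ring

lemma sum_offDiag_update_sub {W : Matrix ι ι R} (hW : W.IsSymm) (x : ι → R) (u : ι) (a : R) :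
    ∑ w, ∑ v ∈ univ.filter (fun v => v ≠ w), W w v * Function.update x u a w
        * Function.update x u a v
      - ∑ w, ∑ v ∈ univ.filter (fun v => v ≠ w), W w v * x w * x v
      = 2 * (a - x u) * ∑ v ∈ univ.filter (fun v => v ≠ u), W u v * x v := by
  have row : ∑ v ∈ univ.filter (fun v => v ≠ u), W u v * Function.update x u a v
      = ∑ v ∈ univ.filter (fun v => v ≠ u), W u v * x v :=
    sum_congr rfl fun v hv => by rw [Function.update_of_ne (mem_filter.mp hv).2]
  have rest : ∑ w ∈ univ.erase u, ∑ v ∈ (univ.filter (fun v => v ≠ w)).erase u,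
        W w v * Function.update x u a w * Function.update x u a v
      = ∑ w ∈ univ.erase u, ∑ v ∈ (univ.filter (fun v => v ≠ w)).erase u,
        W w v * x w * x v :=
    sum_congr rfl fun w hw => sum_congr rfl fun v hv => by
      rw [Function.update_of_ne (ne_of_mem_erase hw), Function.update_of_ne (ne_of_mem_erase hv)]
  rw [sum_offDiag_eq_two_mul_add hW _ u, sum_offDiag_eq_two_mul_add hW x u, row, rest,
    Function.update_self]
  ring

lemma sum_mul_update_sub (f x : ι → R) (u : ι) (a : R) :
    ∑ v, f v * Function.update x u a v - ∑ v, f v * x v = f u * (a - x u) := by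
  rw [← sum_sub_distrib, sum_eq_single u (fun v _ hv => by rw [Function.update_of_ne hv, sub_self])
    (fun h => absurd (mem_univ u) h), Function.update_self, mul_sub]

end QuadraticForm

lemma energy_update_sub {n : ℕ} {W : Matrix (Fin n) (Fin n) ℝ} (hsymm : W.IsSymm)
    (θ : Fin n → ℝ) (s : Fin n → ℝ) (u : Fin n) (a : ℝ) :
    energy W θ (Function.update s u a) - energy W θ s
      = (s u - a) * (netInput W s u - θ u) := by
  have quadratic := sum_offDiag_update_sub hsymm s u a
  have linear := sum_mul_update_sub θ s u a
  unfold energy netInput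
  linear_combination (-(1 / 2) : ℝ) * quadratic + linear

theorem energy_diff_of_update_general {n : ℕ}
    (W : Matrix (Fin n) (Fin n) ℝ) (hsymm : W.IsSymm)
    (θ : Fin n → ℝ) (s : Fin n → ℝ) (u : Fin n) :
    energy W θ (Up W θ s u) - energy W θ s
      = (s u - Up W θ s u u) * (netInput W s u - θ u) := by
  obtain ⟨a, hUp⟩ : ∃ a, Up W θ s u = Function.update s u a := ⟨_, rfl⟩
  rw [hUp, Function.update_self]
  exact energy_update_sub hsymm θ s u a

/-- Energy difference under an asynchronous update that changes the activation of `u`. -/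
theorem energy_diff_of_update {n : ℕ} (hn : 2 ≤ n)
    (W : Matrix (Fin n) (Fin n) ℝ) (hsymm : W.IsSymm) (hdiag : ∀ u, W u u = 0)
    (θ : Fin n → ℝ) (s : Fin n → ℝ) (hs : ∀ u, s u = -1 ∨ s u = 1) (u : Fin n)
    (hchange : Up W θ s u u ≠ s u) :
    energy W θ (Up W θ s u) - energy W θ s
      = (s u - Up W θ s u u) * (netInput W s u - θ u) :=
  energy_diff_of_update_general W hsymm θ s u
end
end

section
/- Let W be the weight matrix and θ the threshold vector of a Hopfield network on n neurons, and let s be any state. For every fair update sequence useq : ℕ → Fin n, there exists N such that the state seqStates(s, useq, N) obtained after N asynchronous updates along useq is stable. -/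
open Finset

noncomputable section

/-- The trajectory of states obtained by asynchronously updating along the sequence `useq`. -/
def seqStates {n : ℕ} (W : Matrix (Fin n) (Fin n) ℝ) (θ : Fin n → ℝ)
    (s : Fin n → ℝ) (useq : ℕ → Fin n) : ℕ → (Fin n → ℝ)
  | 0 => s
  | k + 1 => Up W θ (seqStates W θ s useq k) (useq k)

/-- A state is stable if updating any neuron leaves the state unchanged. -/
def isStable {n : ℕ} (W : Matrix (Fin n) (Fin n) ℝ) (θ : Fin n → ℝ)
    (s : Fin n → ℝ) : Prop :=
  ∀ u, Up W θ s u = s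

/-- A sequence of neurons is fair if every neuron occurs infinitely often. -/
def fair {n : ℕ} (useq : ℕ → Fin n) : Prop :=
  ∀ u k, ∃ m ≥ k, useq m = u

/-!
Every asynchronous update either leaves the state unchanged or strictly decreases the pair
`(energy, -∑ s)` in the lexicographic order: flipping neuron `u` by `δ = s'ᵤ - sᵤ` changes
the energy by `δ (θᵤ - netᵤ)` (using the symmetry of `W`), which is `≤ 0` by the choice of
the update and vanishes only for a flip from `-1` to `1` at net input equal to the threshold,
a flip that increases `∑ s`. As the states lie in the finite set `{-1, 1}ⁿ`, the trajectory
is eventually constant, and by fairness its limit is fixed by every neuron's update.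
-/

theorem exists_forall_ge_eq_of_lyapunov {α β : Type*} [LinearOrder β] {x : ℕ → α}
    (V : α → β) (hfin : (Set.range x).Finite)
    (hstep : ∀ k, x (k + 1) = x k ∨ V (x (k + 1)) < V (x k)) :
    ∃ N, ∀ k ≥ N, x k = x N := by
  obtain ⟨_, ⟨N, rfl⟩, hmin⟩ := Set.exists_min_image _ V hfin (Set.range_nonempty x)
  refine ⟨N, fun k hk => ?_⟩
  induction k, hk using Nat.le_induction with
  | base => rfl
  | succ k _ ih =>
    refine ((hstep k).resolve_right fun hlt => ?_).trans ih
    rw [ih] at hlt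
    exact (hlt.trans_le (hmin _ ⟨k + 1, rfl⟩)).false

theorem Finset.sum_update_eq_add_sub {ι M : Type*} [DecidableEq ι] [AddCommGroup M]
    {S : Finset ι} {u : ι} (hu : u ∈ S) (s : ι → M) (a : M) :
    ∑ v ∈ S, Function.update s u a v = ∑ v ∈ S, s v + (a - s u) := by
  rw [sum_update_of_mem hu, sum_eq_add_sum_sdiff_singleton_of_mem hu]
  abel

theorem Finset.sum_mul_update {ι R : Type*} [DecidableEq ι] [Ring R] {S : Finset ι} {u : ι}
    (hu : u ∈ S) (g s : ι → R) (a : R) :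
    ∑ v ∈ S, g v * Function.update s u a v = ∑ v ∈ S, g v * s v + g u * (a - s u) := by
  rw [← add_sum_erase S _ hu, ← add_sum_erase S _ hu, Function.update_self,
    sum_congr rfl fun v hv => by rw [Function.update_of_ne (ne_of_mem_erase hv)], mul_sub]
  abel

theorem finite_setOf_bipolar (n : ℕ) : {s : Fin n → ℝ | ∀ u, s u = -1 ∨ s u = 1}.Finite :=
  (Set.Finite.pi fun _ => (Set.finite_singleton (1 : ℝ)).insert (-1)).subset
    fun _ hs u _ => hs u

section

variable {n : ℕ} (W : Matrix (Fin n) (Fin n) ℝ) (θ : Fin n → ℝ)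

theorem netInput_eq_sum_erase (s : Fin n → ℝ) (u : Fin n) :
    netInput W s u = ∑ v ∈ univ.erase u, W u v * s v := by
  rw [netInput, filter_ne']

theorem netInput_update_self (s : Fin n → ℝ) (u : Fin n) (a : ℝ) :
    netInput W (Function.update s u a) u = netInput W s u :=
  sum_congr rfl fun v hv => by rw [Function.update_of_ne (mem_filter.1 hv).2]

theorem netInput_update_of_ne (s : Fin n → ℝ) {u x : Fin n} (hx : x ≠ u) (a : ℝ) :
    netInput W (Function.update s u a) x = netInput W s x + W x u * (a - s u) := by
  simp only [netInput_eq_sum_erase]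
  exact sum_mul_update (mem_erase.2 ⟨hx.symm, mem_univ u⟩) _ _ _

theorem energy_eq_sum_mul_netInput (s : Fin n → ℝ) :
    energy W θ s = -(1 / 2) * ∑ x, s x * netInput W s x + ∑ x, θ x * s x := by
  rw [energy]
  congr 2
  exact sum_congr rfl fun x _ => by rw [netInput, mul_sum]; exact sum_congr rfl fun v _ => by ring

theorem sum_mul_netInput_update (hsymm : W.IsSymm) (s : Fin n → ℝ) (u : Fin n) (a : ℝ) :
    ∑ x, Function.update s u a x * netInput W (Function.update s u a) x
      = ∑ x, s x * netInput W s x + 2 * (a - s u) * netInput W s u := by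
  have hcol : ∑ x ∈ univ.erase u, s x * (W x u * (a - s u)) = netInput W s u * (a - s u) := by
    rw [netInput_eq_sum_erase, sum_mul]
    exact sum_congr rfl fun x _ => by rw [hsymm.apply u x]; ring
  rw [← add_sum_erase _ _ (mem_univ u), ← add_sum_erase _ _ (mem_univ u),
    Function.update_self, netInput_update_self,
    sum_congr rfl fun x hx => by
      rw [Function.update_of_ne (ne_of_mem_erase hx),
        netInput_update_of_ne W s (ne_of_mem_erase hx)]]
  simp only [mul_add, sum_add_distrib, hcol]
  ring

theorem energy_update (hsymm : W.IsSymm) (s : Fin n → ℝ) (u : Fin n) (a : ℝ) :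
    energy W θ (Function.update s u a)
      = energy W θ s + (a - s u) * (θ u - netInput W s u) := by
  rw [energy_eq_sum_mul_netInput, energy_eq_sum_mul_netInput, sum_mul_netInput_update W hsymm,
    sum_mul_update (mem_univ u)]
  ring

def energyLex (s : Fin n → ℝ) : ℝ ×ₗ ℝ :=
  toLex (energy W θ s, -∑ x, s x)

theorem Up_eq_or_energyLex_lt (hsymm : W.IsSymm) (s : Fin n → ℝ) (u : Fin n)
    (hsu : s u = -1 ∨ s u = 1) :
    Up W θ s u = s ∨ energyLex W θ (Up W θ s u) < energyLex W θ s := by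
  simp only [Up, energyLex, Prod.Lex.toLex_lt_toLex, energy_update W θ hsymm,
    sum_update_eq_add_sub (mem_univ u), Function.update_eq_self_iff]
  split_ifs with h <;> rcases hsu with hsu | hsu <;> simp only [hsu] <;> norm_num
  · rcases h.lt_or_eq with h | h
    · exact Or.inl (by linarith)
    · exact Or.inr (by linarith)
  · exact not_le.1 h

theorem Up_apply_bipolar {s : Fin n → ℝ} (hs : ∀ v, s v = -1 ∨ s v = 1) (u v : Fin n) :
    Up W θ s u v = -1 ∨ Up W θ s u v = 1 := by
  rcases eq_or_ne v u with rfl | hv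
  · rw [Up, Function.update_self]
    split_ifs <;> simp
  · rw [Up, Function.update_of_ne hv]
    exact hs v

theorem seqStates_apply_bipolar {s : Fin n → ℝ} (hs : ∀ v, s v = -1 ∨ s v = 1)
    (useq : ℕ → Fin n) (k : ℕ) :
    ∀ v, seqStates W θ s useq k v = -1 ∨ seqStates W θ s useq k v = 1 := by
  induction k with
  | zero => exact hs
  | succ k ih => exact Up_apply_bipolar W θ ih (useq k)

end

theorem hopfieldNet_convergence_fair_general {n : ℕ}
    (W : Matrix (Fin n) (Fin n) ℝ) (hsymm : W.IsSymm)
    (θ : Fin n → ℝ) (s : Fin n → ℝ) (hs : ∀ u, s u = -1 ∨ s u = 1) :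
    ∀ useq : ℕ → Fin n, fair useq →
      ∃ N, isStable W θ (seqStates W θ s useq N) := by
  intro useq hfair
  have hbip := seqStates_apply_bipolar W θ hs useq
  obtain ⟨N, hN⟩ := exists_forall_ge_eq_of_lyapunov (energyLex W θ)
    ((finite_setOf_bipolar n).subset (Set.range_subset_iff.2 hbip))
    fun k => Up_eq_or_energyLex_lt W θ hsymm _ (useq k) (hbip k (useq k))
  refine ⟨N, fun u => ?_⟩
  obtain ⟨m, hm, rfl⟩ := hfair u N
  rw [← hN m hm]
  exact (hN (m + 1) (by omega)).trans (hN m hm).symm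

/-- Convergence of a Hopfield network under any fair asynchronous update sequence. -/
theorem hopfieldNet_convergence_fair {n : ℕ} (hn : 2 ≤ n)
    (W : Matrix (Fin n) (Fin n) ℝ) (hsymm : W.IsSymm) (hdiag : ∀ u, W u u = 0)
    (θ : Fin n → ℝ) (s : Fin n → ℝ) (hs : ∀ u, s u = -1 ∨ s u = 1) :
    ∀ useq : ℕ → Fin n, fair useq →
      ∃ N, isStable W θ (seqStates W θ s useq N) :=
  hopfieldNet_convergence_fair_general W hsymm θ s hs
end
end

section
/- Let n ≥ 2, let m < n, and let p₁, …, p_m : Fin n → ℝ be patterns that are pairwise orthogonal (dotProduct (p i) (p j) = 0 for i ≠ j). Then each p j is a stable state of the Hopfield network with the Hebbian weight matrix W = ∑_{i=1}^{m} p_i p_iᵀ − m • I and zero thresholds. -/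
/-! Orthogonality makes each pattern `p j` an eigenvector of `∑ i, pᵢ pᵢᵀ` with eigenvalue
`p j ⬝ᵥ p j = n`, while every diagonal entry of that matrix equals `m` for ±1 patterns. Net input
ignores the diagonal, so at neuron `u` it is `n * p j u - m * p j u`, which has the sign of `p j u`
because `m < n`: no update flips a neuron. -/

open Finset

noncomputable section

open Matrix

theorem netInput_eq_mulVec_sub {n : ℕ} (W : Matrix (Fin n) (Fin n) ℝ) (s : Fin n → ℝ)
    (u : Fin n) : netInput W s u = (W *ᵥ s) u - W u u * s u := by
  rw [netInput, filter_ne', sum_erase_eq_sub (mem_univ u)]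
  rfl

theorem netInput_sub_smul_one {n : ℕ} (W : Matrix (Fin n) (Fin n) ℝ) (c : ℝ)
    (s : Fin n → ℝ) (u : Fin n) : netInput (W - c • 1) s u = netInput W s u := by
  refine sum_congr rfl fun v hv => ?_
  rw [mem_filter] at hv
  simp [one_apply_ne' hv.2]

theorem up_eq_self_of_pos {n : ℕ} {W : Matrix (Fin n) (Fin n) ℝ} {θ s : Fin n → ℝ}
    {u : Fin n} (hs : s u = -1 ∨ s u = 1) (h : 0 < (netInput W s u - θ u) * s u) :
    Up W θ s u = s := by
  rw [Up]
  rcases hs with hs | hs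
  · rw [if_neg (by nlinarith), ← hs, Function.update_eq_self]
  · rw [if_pos (by nlinarith), ← hs, Function.update_eq_self]

theorem mul_self_eq_one_of_sign {x : ℝ} (hx : x = -1 ∨ x = 1) : x * x = 1 := by
  rcases hx with rfl | rfl <;> norm_num

section Patterns

variable {ι : Type*} [Fintype ι] {n : ℕ}

theorem dotProduct_self_of_sign {s : Fin n → ℝ} (hs : ∀ u, s u = -1 ∨ s u = 1) :
    s ⬝ᵥ s = n := by
  simp [dotProduct, mul_self_eq_one_of_sign (hs _)]

theorem sum_vecMulVec_self_apply_self {p : ι → Fin n → ℝ} (hp : ∀ i u, p i u = -1 ∨ p i u = 1)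
    (u : Fin n) : (∑ i, vecMulVec (p i) (p i)) u u = Fintype.card ι := by
  simp [Matrix.sum_apply, vecMulVec_apply, mul_self_eq_one_of_sign (hp _ u)]

theorem sum_vecMulVec_self_mulVec_of_orthogonal {R : Type*} [CommSemiring R] {κ : Type*}
    [Fintype κ] {p : ι → κ → R} (horth : ∀ i j, i ≠ j → p i ⬝ᵥ p j = 0) (j : ι) :
    (∑ i, vecMulVec (p i) (p i)) *ᵥ p j = (p j ⬝ᵥ p j) • p j := by
  rw [sum_mulVec, sum_eq_single j (fun i _ hij => by simp [vecMulVec_mulVec, horth i j hij])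
    (by simp), vecMulVec_mulVec, op_smul_eq_smul]

theorem netInput_sum_vecMulVec_self {p : ι → Fin n → ℝ} (hp : ∀ i u, p i u = -1 ∨ p i u = 1)
    (horth : ∀ i j, i ≠ j → p i ⬝ᵥ p j = 0) (j : ι) (u : Fin n) :
    netInput (∑ i, vecMulVec (p i) (p i)) (p j) u = (n - Fintype.card ι) * p j u := by
  rw [netInput_eq_mulVec_sub, sum_vecMulVec_self_mulVec_of_orthogonal horth,
    dotProduct_self_of_sign (hp j), sum_vecMulVec_self_apply_self hp]
  simp only [Pi.smul_apply, smul_eq_mul]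
  ring

end Patterns

theorem hebbian_patterns_stable_general {n m : ℕ} (hm : m < n)
    (p : Fin m → Fin n → ℝ) (hp : ∀ i u, p i u = -1 ∨ p i u = 1)
    (horth : ∀ i j, i ≠ j → p i ⬝ᵥ p j = 0) :
    ∀ j, isStable ((∑ i, Matrix.vecMulVec (p i) (p i)) - (m : ℝ) • 1)
      (fun _ => 0) (p j) := by
  intro j u
  refine up_eq_self_of_pos (hp j u) ?_
  rw [netInput_sub_smul_one, netInput_sum_vecMulVec_self hp horth, Fintype.card_fin, sub_zero,
    mul_assoc, mul_self_eq_one_of_sign (hp j u), mul_one, sub_pos]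
  exact_mod_cast hm

/-- Pairwise orthogonal patterns stored by the Hebbian rule are stable states of the
Hopfield network with weight matrix `W = ∑ i, pᵢ pᵢᵀ - m • I` and zero thresholds. -/
theorem hebbian_patterns_stable {n m : ℕ} (hn : 2 ≤ n) (hm : m < n)
    (p : Fin m → Fin n → ℝ) (hp : ∀ i u, p i u = -1 ∨ p i u = 1)
    (horth : ∀ i j, i ≠ j → p i ⬝ᵥ p j = 0) :
    ∀ j, isStable ((∑ i, Matrix.vecMulVec (p i) (p i)) - (m : ℝ) • 1)
      (fun _ => 0) (p j) :=
  hebbian_patterns_stable_general hm p hp horth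
end
end

section
/- Let A : Matrix (Fin n) (Fin n) ℝ be entrywise nonnegative and irreducible, and let v : Fin n → ℝ be an entrywise nonnegative, nonzero vector with A.mulVec v = r • v for some real r. Then v is entrywise strictly positive. -/
/-!
Pick `j` with `v j > 0`. For any `i`, irreducibility gives `k` with `(A ^ k) i j > 0`, and then
`r ^ k * v i = (A ^ k *ᵥ v) i ≥ (A ^ k) i j * v j > 0`, so `v i ≠ 0`.
-/

namespace Matrix

variable {ι R : Type*} [Fintype ι]

theorem pow_mulVec_eq_smul_of_mulVec_eq_smul [CommSemiring R] [DecidableEq ι]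
    {A : Matrix ι ι R} {v : ι → R} {r : R} (h : A *ᵥ v = r • v) (k : ℕ) :
    (A ^ k) *ᵥ v = r ^ k • v := by
  induction k with
  | zero => simp
  | succ k ih =>
    rw [pow_succ', ← mulVec_mulVec, ih, mulVec_smul, h, smul_smul, pow_succ]

theorem mulVec_apply_pos [Semiring R] [PartialOrder R] [IsStrictOrderedRing R]
    {M : Matrix ι ι R} {v : ι → R} {i j : ι} (hM : ∀ l, 0 ≤ M i l) (hv : ∀ l, 0 ≤ v l)
    (hMij : 0 < M i j) (hvj : 0 < v j) : 0 < (M *ᵥ v) i :=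
  Finset.sum_pos' (fun l _ => mul_nonneg (hM l) (hv l)) ⟨j, Finset.mem_univ j, mul_pos hMij hvj⟩

end Matrix

/-- A nonnegative eigenvector of a nonnegative irreducible matrix is entrywise strictly
positive. -/
theorem eigenvector_pos_of_irreducible {n : ℕ} (A : Matrix (Fin n) (Fin n) ℝ)
    (hA : ∀ i j, 0 ≤ A i j) (hirr : ∀ i j, ∃ k : ℕ, 0 < (A ^ k) i j)
    (v : Fin n → ℝ) (hv : ∀ i, 0 ≤ v i) (hv0 : v ≠ 0)
    (r : ℝ) (heig : A.mulVec v = r • v) :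
    ∀ i, 0 < v i := by
  obtain ⟨j, hj⟩ : ∃ j, 0 < v j := (Pi.lt_def.mp (lt_of_le_of_ne hv hv0.symm)).2
  intro i
  obtain ⟨k, hk⟩ := hirr i j
  have hpos : 0 < (A ^ k).mulVec v i :=
    Matrix.mulVec_apply_pos (Matrix.pow_apply_nonneg hA k i) hv hk hj
  rw [Matrix.pow_mulVec_eq_smul_of_mulVec_eq_smul heig, Pi.smul_apply, smul_eq_mul] at hpos
  exact (hv i).lt_of_ne fun hvi => by simp [← hvi] at hpos
end

section
/- Let A : Matrix (Fin n) (Fin n) ℝ be entrywise nonnegative. The Collatz–Wielandt function x ↦ min { (A.mulVec x) i / x i : i with x i > 0 } is upper semicontinuous on the standard simplex { x : Fin n → ℝ : x i ≥ 0 for all i and ∑ i, x i = 1 }. -/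
open Finset

noncomputable section

/-- The Collatz–Wielandt function of a matrix `A`: the minimum over indices `i` with
`x i > 0` of `(A.mulVec x) i / x i` (and `0` if there is no such index). -/
def collatzWielandtFn {n : ℕ} (A : Matrix (Fin n) (Fin n) ℝ) (x : Fin n → ℝ) : ℝ :=
  if h : (univ.filter (fun i => 0 < x i)).Nonempty then
    (univ.filter (fun i => 0 < x i)).inf' h (fun i => A.mulVec x i / x i)
  else 0

/-! Near a point `x` the set of indices with positive coordinate can only grow, so the
minimum defining `collatzWielandtFn A` is taken over more of the ratios, each of which is
continuous where its denominator is positive. On the simplex that set is nonempty at `x`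
itself, which rules out a jump up from the default value `0`. -/

theorem exists_pos_of_mem_stdSimplex {ι : Type*} [Fintype ι] {x : ι → ℝ}
    (hx : x ∈ stdSimplex ℝ ι) : ∃ i, 0 < x i := by
  have hsum : ∑ _i : ι, (0 : ℝ) < ∑ i, x i := by simp [hx.2]
  obtain ⟨i, -, hi⟩ := exists_lt_of_sum_lt hsum
  exact ⟨i, hi⟩

theorem continuousAt_mulVec_apply_div_apply {ι : Type*} [Fintype ι] (A : Matrix ι ι ℝ)
    {x : ι → ℝ} {i : ι} (hi : x i ≠ 0) :
    ContinuousAt (fun y : ι → ℝ => A.mulVec y i / y i) x :=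
  ((continuous_apply i).comp (continuous_const.matrix_mulVec continuous_id)).continuousAt.div
    (continuous_apply i).continuousAt hi

section CollatzWielandt

variable {n : ℕ} (A : Matrix (Fin n) (Fin n) ℝ) {x : Fin n → ℝ}

theorem collatzWielandtFn_le_of_pos {i : Fin n} (hi : 0 < x i) :
    collatzWielandtFn A x ≤ A.mulVec x i / x i := by
  have hmem : i ∈ univ.filter (fun j => 0 < x j) := by simpa using hi
  rw [collatzWielandtFn, dif_pos ⟨i, hmem⟩]
  exact inf'_le _ hmem

theorem exists_pos_div_lt_of_collatzWielandtFn_lt {i : Fin n} (hi : 0 < x i) {c : ℝ}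
    (hc : collatzWielandtFn A x < c) : ∃ j, 0 < x j ∧ A.mulVec x j / x j < c := by
  have hne : (univ.filter (fun j => 0 < x j)).Nonempty := ⟨i, by simpa using hi⟩
  rw [collatzWielandtFn, dif_pos hne, inf'_lt_iff] at hc
  obtain ⟨j, hj, hjc⟩ := hc
  exact ⟨j, (mem_filter.mp hj).2, hjc⟩

end CollatzWielandt

theorem collatzWielandtFn_upperSemicontinuousOn_general {n : ℕ}
    (A : Matrix (Fin n) (Fin n) ℝ) :
    UpperSemicontinuousOn (collatzWielandtFn A) (stdSimplex ℝ (Fin n)) := by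
  intro x hx c hc
  obtain ⟨i, hi⟩ := exists_pos_of_mem_stdSimplex hx
  obtain ⟨j, hj, hjc⟩ := exists_pos_div_lt_of_collatzWielandtFn_lt A hi hc
  have hratio : ∀ᶠ y in nhds x, A.mulVec y j / y j < c :=
    continuousAt_mulVec_apply_div_apply A hj.ne' (Iio_mem_nhds hjc)
  have hpos : ∀ᶠ y in nhds x, 0 < y j :=
    (continuous_apply j).continuousAt (Ioi_mem_nhds hj)
  filter_upwards [nhdsWithin_le_nhds (hratio.and hpos)] with y ⟨hyc, hyj⟩
  exact (collatzWielandtFn_le_of_pos A hyj).trans_lt hyc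

/-- The Collatz–Wielandt function of a nonnegative matrix is upper semicontinuous on the
standard simplex. -/
theorem collatzWielandtFn_upperSemicontinuousOn {n : ℕ}
    (A : Matrix (Fin n) (Fin n) ℝ) (hA : ∀ i j, 0 ≤ A i j) :
    UpperSemicontinuousOn (collatzWielandtFn A) (stdSimplex ℝ (Fin n)) :=
  collatzWielandtFn_upperSemicontinuousOn_general A
end
end

section
/- Let A : Matrix (Fin n) (Fin n) ℝ be entrywise nonnegative and irreducible, and let r be its Perron root (the supremum of the Collatz–Wielandt function over the standard simplex). Then every complex eigenvalue λ of A satisfies |λ| ≤ r; that is, r equals the spectral radius of A. -/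
/-!
If `A v = μ v`, the triangle inequality gives `‖μ‖ |v| ≤ A |v|` entrywise, so the normalised
vector `|v|` has Collatz–Wielandt value at least `‖μ‖`, whence `‖μ‖ ≤ r`. Conversely, a nonnegative
`x ≠ 0` with `c x ≤ A x` satisfies `c^k x ≤ A^k x`, so `c^k ≤ ‖A^k‖` in the `∞`-operator norm, and
Gelfand's formula puts `c` below the spectral radius, which is attained on the compact spectrum.
-/

open Finset

noncomputable section

/-- The Perron root of `A`: the supremum of the Collatz–Wielandt function over the
standard simplex. -/
def perronRoot {n : ℕ} (A : Matrix (Fin n) (Fin n) ℝ) : ℝ :=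
  sSup (collatzWielandtFn A '' stdSimplex ℝ (Fin n))

open Matrix Filter

section BanachAlgebra

variable {𝔸 : Type*} [NormedRing 𝔸] [NormedAlgebra ℂ 𝔸] [CompleteSpace 𝔸]

theorem spectrum.exists_le_norm_of_pow_le_norm_pow {a : 𝔸} {c : ℝ} (hc : 0 ≤ c)
    (h : ∀ k : ℕ, c ^ k ≤ ‖a ^ k‖) : ∃ μ ∈ spectrum ℂ a, c ≤ ‖μ‖ := by
  have : Nontrivial 𝔸 := nontrivial_of_ne 1 0 fun h1 => by
    simpa [h1] using (one_pos.trans_le (h 0) : 0 < ‖a ^ 0‖)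
  obtain ⟨μ, hμ, hρ⟩ := spectrum.exists_nnnorm_eq_spectralRadius a
  refine ⟨μ, hμ, ?_⟩
  have hc_le : ENNReal.ofReal c ≤ spectralRadius ℂ a := by
    refine ge_of_tendsto (spectrum.pow_norm_pow_one_div_tendsto_nhds_spectralRadius a) ?_
    filter_upwards [eventually_ne_atTop 0] with k hk
    refine ENNReal.ofReal_le_ofReal ?_
    calc c = (c ^ k) ^ (1 / k : ℝ) := by
          rw [← Real.rpow_natCast, ← Real.rpow_mul hc, mul_one_div_cancel (by exact_mod_cast hk),
            Real.rpow_one]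
      _ ≤ ‖a ^ k‖ ^ (1 / k : ℝ) := by gcongr; exact h k
  rw [← hρ, ENNReal.ofReal_le_iff_le_toReal ENNReal.coe_ne_top] at hc_le
  simpa using hc_le

end BanachAlgebra

namespace Matrix

section NonnegMatrix

variable {ι : Type*} [Fintype ι] {A : Matrix ι ι ℝ}

theorem mulVec_mono_of_nonneg (hA : ∀ i j, 0 ≤ A i j) {x y : ι → ℝ} (hxy : x ≤ y) :
    A *ᵥ x ≤ A *ᵥ y := fun i =>
  Finset.sum_le_sum fun j _ => mul_le_mul_of_nonneg_left (hxy j) (hA i j)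

theorem mulVec_nonneg_of_nonneg (hA : ∀ i j, 0 ≤ A i j) {x : ι → ℝ} (hx : 0 ≤ x) :
    0 ≤ A *ᵥ x := by
  simpa using mulVec_mono_of_nonneg hA hx

theorem pow_smul_le_pow_mulVec [DecidableEq ι] (hA : ∀ i j, 0 ≤ A i j) {c : ℝ} (hc : 0 ≤ c)
    {x : ι → ℝ} (h : c • x ≤ A *ᵥ x) (k : ℕ) : c ^ k • x ≤ (A ^ k) *ᵥ x := by
  induction k with
  | zero => simp
  | succ k ih =>
    calc c ^ (k + 1) • x = c ^ k • (c • x) := by rw [pow_succ, mul_smul]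
      _ ≤ c ^ k • (A *ᵥ x) := smul_le_smul_of_nonneg_left h (pow_nonneg hc k)
      _ = A *ᵥ (c ^ k • x) := (mulVec_smul A _ x).symm
      _ ≤ A *ᵥ ((A ^ k) *ᵥ x) := mulVec_mono_of_nonneg hA ih
      _ = (A ^ (k + 1)) *ᵥ x := by rw [pow_succ', mulVec_mulVec]

end NonnegMatrix

section LinftyNorm

attribute [local instance] Matrix.linftyOpNormedRing Matrix.linftyOpNormedAlgebra

variable {ι : Type*} [Fintype ι] [DecidableEq ι] {A : Matrix ι ι ℝ}

theorem pow_le_linfty_opNorm_pow (hA : ∀ i j, 0 ≤ A i j) {c : ℝ} (hc : 0 ≤ c) {x : ι → ℝ}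
    (hx : 0 ≤ x) (hx0 : x ≠ 0) (h : c • x ≤ A *ᵥ x) (k : ℕ) : c ^ k ≤ ‖A ^ k‖ := by
  have hle : ‖c ^ k • x‖ ≤ ‖(A ^ k) *ᵥ x‖ := by
    refine (pi_norm_le_iff_of_nonneg (norm_nonneg _)).mpr fun i => ?_
    calc ‖(c ^ k • x) i‖ = (c ^ k • x) i :=
          Real.norm_of_nonneg (smul_nonneg (pow_nonneg hc k) hx i)
      _ ≤ ((A ^ k) *ᵥ x) i := pow_smul_le_pow_mulVec hA hc h k i
      _ ≤ ‖(A ^ k) *ᵥ x‖ := (Real.le_norm_self _).trans (norm_le_pi_norm _ i)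
  refine le_of_mul_le_mul_right ?_ (norm_pos_iff.mpr hx0)
  calc c ^ k * ‖x‖ = ‖c ^ k • x‖ := by rw [norm_smul, Real.norm_of_nonneg (pow_nonneg hc k)]
    _ ≤ ‖(A ^ k) *ᵥ x‖ := hle
    _ ≤ ‖A ^ k‖ * ‖x‖ := linfty_opNorm_mulVec _ _

theorem exists_mem_spectrum_le_norm_of_smul_le_mulVec (hA : ∀ i j, 0 ≤ A i j) {c : ℝ}
    (hc : 0 ≤ c) {x : ι → ℝ} (hx : 0 ≤ x) (hx0 : x ≠ 0) (h : c • x ≤ A *ᵥ x) :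
    ∃ μ ∈ spectrum ℂ (A.map Complex.ofReal), c ≤ ‖μ‖ := by
  refine spectrum.exists_le_norm_of_pow_le_norm_pow hc fun k => ?_
  rw [show A.map Complex.ofReal ^ k = (A ^ k).map Complex.ofReal from
    (Matrix.map_pow A Complex.ofRealHom k).symm]
  simpa [linfty_opNorm_def] using pow_le_linfty_opNorm_pow hA hc hx hx0 h k

end LinftyNorm

theorem exists_mulVec_eq_smul_of_mem_spectrum {K ι : Type*} [Field K] [Fintype ι]
    [DecidableEq ι] {M : Matrix ι ι K} {μ : K} (hμ : μ ∈ spectrum K M) :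
    ∃ v ≠ 0, M *ᵥ v = μ • v := by
  rw [← spectrum_toLin', ← Module.End.hasEigenvalue_iff_mem_spectrum] at hμ
  obtain ⟨v, hv⟩ := hμ.exists_hasEigenvector
  exact ⟨v, hv.2, by simpa using hv.apply_eq_smul⟩

theorem norm_smul_le_mulVec_of_mulVec_eq_smul {ι : Type*} [Fintype ι] {A : Matrix ι ι ℝ}
    (hA : ∀ i j, 0 ≤ A i j) {μ : ℂ} {v : ι → ℂ} (hv : A.map Complex.ofReal *ᵥ v = μ • v) :
    ‖μ‖ • (fun i => ‖v i‖) ≤ A *ᵥ fun i => ‖v i‖ := fun i =>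
  calc ‖μ‖ * ‖v i‖ = ‖(A.map Complex.ofReal *ᵥ v) i‖ := by
        rw [hv, Pi.smul_apply, smul_eq_mul, norm_mul]
    _ = ‖∑ j, (A i j : ℂ) * v j‖ := rfl
    _ ≤ ∑ j, ‖(A i j : ℂ) * v j‖ := norm_sum_le _ _
    _ = (A *ᵥ fun i => ‖v i‖) i := Finset.sum_congr rfl fun j _ => by
        rw [norm_mul, Complex.norm_real, Real.norm_of_nonneg (hA i j)]

end Matrix

section CollatzWielandt

variable {n : ℕ} {A : Matrix (Fin n) (Fin n) ℝ} {x : Fin n → ℝ}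

theorem le_collatzWielandtFn {c : ℝ} (hx : ∃ i, 0 < x i) (h : c • x ≤ A *ᵥ x) :
    c ≤ collatzWielandtFn A x := by
  obtain ⟨i₀, hi₀⟩ := hx
  have hne : (univ.filter (fun i => 0 < x i)).Nonempty := ⟨i₀, by simpa using hi₀⟩
  rw [collatzWielandtFn, dif_pos hne]
  refine Finset.le_inf' hne _ fun i hi => ?_
  rw [le_div_iff₀ (Finset.mem_filter.mp hi).2]
  exact h i

theorem collatzWielandtFn_smul_le_mulVec (hA : ∀ i j, 0 ≤ A i j) (hx : 0 ≤ x) :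
    collatzWielandtFn A x • x ≤ A *ᵥ x := by
  intro i
  rcases (hx i).eq_or_lt with hi | hi
  · simpa [← hi] using mulVec_nonneg_of_nonneg hA hx i
  have hne : (univ.filter (fun i => 0 < x i)).Nonempty := ⟨i, by simpa using hi⟩
  have hle : collatzWielandtFn A x ≤ (A *ᵥ x) i / x i := by
    rw [collatzWielandtFn, dif_pos hne]
    exact Finset.inf'_le _ (by simpa using hi)
  simpa [le_div_iff₀ hi] using hle

theorem collatzWielandtFn_nonneg (hA : ∀ i j, 0 ≤ A i j) (hx : 0 ≤ x) :
    0 ≤ collatzWielandtFn A x := by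
  by_cases hpos : ∃ i, 0 < x i
  · exact le_collatzWielandtFn hpos (by simpa using mulVec_nonneg_of_nonneg hA hx)
  · rw [collatzWielandtFn, dif_neg (by simpa [Finset.Nonempty] using hpos)]

theorem collatzWielandtFn_le_sum_sum (hA : ∀ i j, 0 ≤ A i j) (hx : x ∈ stdSimplex ℝ (Fin n)) :
    collatzWielandtFn A x ≤ ∑ i, ∑ j, A i j := by
  calc collatzWielandtFn A x = ∑ i, collatzWielandtFn A x * x i := by
        rw [← Finset.mul_sum, hx.2, mul_one]
    _ ≤ ∑ i, (A *ᵥ x) i := Finset.sum_le_sum fun i _ => collatzWielandtFn_smul_le_mulVec hA hx.1 i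
    _ = ∑ i, ∑ j, A i j * x j := rfl
    _ ≤ ∑ i, ∑ j, A i j := Finset.sum_le_sum fun i _ => Finset.sum_le_sum fun j _ =>
        mul_le_of_le_one_right (hA i j) (stdSimplex.le_one ⟨x, hx⟩ j)

theorem bddAbove_collatzWielandtFn_image (hA : ∀ i j, 0 ≤ A i j) :
    BddAbove (collatzWielandtFn A '' stdSimplex ℝ (Fin n)) :=
  ⟨∑ i, ∑ j, A i j, by rintro _ ⟨x, hx, rfl⟩; exact collatzWielandtFn_le_sum_sum hA hx⟩

theorem perronRoot_nonneg (hA : ∀ i j, 0 ≤ A i j) : 0 ≤ perronRoot A :=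
  Real.sSup_nonneg <| by rintro _ ⟨x, hx, rfl⟩; exact collatzWielandtFn_nonneg hA hx.1

theorem le_perronRoot_of_smul_le_mulVec (hA : ∀ i j, 0 ≤ A i j) {c : ℝ} (hx : 0 ≤ x)
    (hx0 : x ≠ 0) (h : c • x ≤ A *ᵥ x) : c ≤ perronRoot A := by
  obtain ⟨i₀, hi₀⟩ : ∃ i, 0 < x i := by
    by_contra! hle
    exact hx0 (funext fun i => le_antisymm (hle i) (hx i))
  set y := (∑ i, x i)⁻¹ • x
  have hsum : 0 < ∑ i, x i := Finset.sum_pos' (fun i _ => hx i) ⟨i₀, Finset.mem_univ _, hi₀⟩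
  have hy : y ∈ stdSimplex ℝ (Fin n) :=
    ⟨smul_nonneg (inv_nonneg.mpr hsum.le) hx, by simp [y, ← Finset.mul_sum, hsum.ne']⟩
  have hcy : c • y ≤ A *ᵥ y := by
    rw [mulVec_smul, smul_comm]
    exact smul_le_smul_of_nonneg_left h (inv_nonneg.mpr hsum.le)
  calc c ≤ collatzWielandtFn A y := le_collatzWielandtFn ⟨i₀, by simp [y, hsum, hi₀]⟩ hcy
    _ ≤ perronRoot A := le_csSup (bddAbove_collatzWielandtFn_image hA) ⟨y, hy, rfl⟩

end CollatzWielandt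

theorem eigenvalue_abs_le_perronRoot_general {n : ℕ} (A : Matrix (Fin n) (Fin n) ℝ)
    (hA : ∀ i j, 0 ≤ A i j) :
    (∀ (μ : ℂ) (v : Fin n → ℂ), v ≠ 0 →
        (A.map (Complex.ofReal)).mulVec v = μ • v → ‖μ‖ ≤ perronRoot A) ∧
      sSup ((fun μ : ℂ => ‖μ‖) '' spectrum ℂ (A.map (Complex.ofReal)))
        = perronRoot A := by
  have eigen_le : ∀ (μ : ℂ) (v : Fin n → ℂ), v ≠ 0 → A.map Complex.ofReal *ᵥ v = μ • v →
      ‖μ‖ ≤ perronRoot A := fun μ v hv0 hv =>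
    le_perronRoot_of_smul_le_mulVec hA (fun i => norm_nonneg (v i))
      (by simpa [funext_iff] using hv0) (norm_smul_le_mulVec_of_mulVec_eq_smul hA hv)
  have spectrum_le : ∀ μ ∈ spectrum ℂ (A.map Complex.ofReal), ‖μ‖ ≤ perronRoot A := by
    intro μ hμ
    obtain ⟨v, hv0, hv⟩ := exists_mulVec_eq_smul_of_mem_spectrum hμ
    exact eigen_le μ v hv0 hv
  refine ⟨eigen_le, le_antisymm ?_ ?_⟩
  · exact Real.sSup_le (by rintro _ ⟨μ, hμ, rfl⟩; exact spectrum_le μ hμ) (perronRoot_nonneg hA)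
  refine Real.sSup_le ?_ (Real.sSup_nonneg (by rintro _ ⟨μ, -, rfl⟩; exact norm_nonneg μ))
  rintro _ ⟨x, hx, rfl⟩
  obtain ⟨μ, hμ, hle⟩ := exists_mem_spectrum_le_norm_of_smul_le_mulVec hA
    (collatzWielandtFn_nonneg hA hx.1) hx.1 (by rintro rfl; simpa using hx.2)
    (collatzWielandtFn_smul_le_mulVec hA hx.1)
  exact hle.trans <| le_csSup ⟨perronRoot A, by rintro _ ⟨ν, hν, rfl⟩; exact spectrum_le ν hν⟩
    ⟨μ, hμ, rfl⟩

/-- For a nonnegative irreducible matrix, every complex eigenvalue has modulus at most the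
Perron root; that is, the Perron root equals the spectral radius. -/
theorem eigenvalue_abs_le_perronRoot {n : ℕ} (A : Matrix (Fin n) (Fin n) ℝ)
    (hA : ∀ i j, 0 ≤ A i j) (hirr : ∀ i j, ∃ k : ℕ, 0 < (A ^ k) i j) :
    (∀ (μ : ℂ) (v : Fin n → ℂ), v ≠ 0 →
        (A.map (Complex.ofReal)).mulVec v = μ • v → ‖μ‖ ≤ perronRoot A) ∧
      sSup ((fun μ : ℂ => ‖μ‖) '' spectrum ℂ (A.map (Complex.ofReal)))
        = perronRoot A :=
  eigenvalue_abs_le_perronRoot_general A hA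
end
end

section
/- Let A : Matrix (Fin n) (Fin n) ℝ be column-stochastic (entrywise nonnegative with every column summing to 1) and irreducible. Then there exists a unique probability vector v (v i ≥ 0 for all i and ∑ i, v i = 1) such that A.mulVec v = v. -/
/-!
Since the columns of `A` sum to `1`, the all-ones row vector is a left fixed vector, so
`det (A - 1) = 0` and `A` has a nonzero fixed vector. If `A u = u`, then `A u⁺` dominates both
`A u = u` and `0`, hence `u⁺`; as `A` preserves sums, `A u⁺ = u⁺`. This produces a nonnegative
fixed vector, which we normalise. For uniqueness, let `u` be the difference of two stationary
vectors, so `A u = u` and `∑ u = 0`. If some `u j > 0`, irreducibility spreads the positivity of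
the fixed vector `u⁺` to every coordinate, so `u > 0`, contradicting `∑ u = 0`.
-/

namespace Matrix

open Finset

variable {ι R : Type*} [Fintype ι] [DecidableEq ι]

lemma pow_mulVec_eq_self [Semiring R] {A : Matrix ι ι R} {v : ι → R} (h : A *ᵥ v = v) (k : ℕ) :
    (A ^ k) *ᵥ v = v := by
  induction k with
  | zero => exact one_mulVec v
  | succ k ih => rw [pow_succ, ← mulVec_mulVec, h, ih]

lemma exists_mulVec_eq_self_of_one_vecMul_eq_one [CommRing R] [IsDomain R] [Nonempty ι]
    {A : Matrix ι ι R} (hA : 1 ᵥ* A = 1) : ∃ v ≠ 0, A *ᵥ v = v := by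
  have hdet : (A - 1).det = 0 :=
    exists_vecMul_eq_zero_iff.1 ⟨1, one_ne_zero, by rw [vecMul_sub, hA, vecMul_one, sub_self]⟩
  obtain ⟨v, hv, hker⟩ := exists_mulVec_eq_zero_iff.2 hdet
  exact ⟨v, hv, by rwa [sub_mulVec, one_mulVec, sub_eq_zero] at hker⟩

section OrderedRing

variable [CommRing R] [LinearOrder R] [IsStrictOrderedRing R] {A : Matrix ι ι R}

lemma mulVec_posPart_eq_self_of_mem_colStochastic (hA : A ∈ colStochastic R ι) {u : ι → R}
    (hu : A *ᵥ u = u) : A *ᵥ u⁺ = u⁺ := by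
  have hle : ∀ i ∈ univ, u⁺ i ≤ (A *ᵥ u⁺) i := fun i _ => by
    refine max_le ?_ (nonneg_mulVec_of_mem_colStochastic hA (fun j => posPart_nonneg _) i)
    conv_lhs => rw [← hu]
    exact dotProduct_le_dotProduct_of_nonneg_left (fun j => le_posPart (u j)) (fun j => hA.1 i j)
  funext i
  exact ((sum_eq_sum_iff_of_le hle).1 (sum_mulVec_of_mem_colStochastic hA).symm i (mem_univ i)).symm

lemma pos_of_mulVec_eq_self_of_pow_pos (hA : ∀ i j, 0 ≤ A i j)
    (hirr : ∀ i j, ∃ k : ℕ, 0 < (A ^ k) i j) {v : ι → R} (hv : 0 ≤ v) (hfix : A *ᵥ v = v)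
    {j : ι} (hj : 0 < v j) (i : ι) : 0 < v i := by
  obtain ⟨k, hk⟩ := hirr i j
  calc 0 < (A ^ k) i j * v j := mul_pos hk hj
    _ ≤ ∑ l, (A ^ k) i l * v l :=
      single_le_sum (fun l _ => mul_nonneg (pow_apply_nonneg hA k i l) (hv l)) (mem_univ j)
    _ = v i := congrFun (pow_mulVec_eq_self hfix k) i

lemma eq_zero_of_mulVec_eq_self_of_sum_eq_zero (hA : A ∈ colStochastic R ι)
    (hirr : ∀ i j, ∃ k : ℕ, 0 < (A ^ k) i j) {u : ι → R} (hu : A *ᵥ u = u)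
    (hsum : ∑ i, u i = 0) : u = 0 := by
  by_contra hne
  obtain ⟨j, hj⟩ : ∃ j, 0 < u j := by
    by_contra! hnonpos
    exact hne <| funext fun i =>
      (sum_eq_zero_iff_of_nonpos fun i _ => hnonpos i).1 hsum i (mem_univ i)
  have hpos : ∀ i, 0 < u i := fun i => posPart_pos_iff.1 <|
    pos_of_mulVec_eq_self_of_pow_pos hA.1 hirr (posPart_nonneg u)
      (mulVec_posPart_eq_self_of_mem_colStochastic hA hu) (posPart_pos_iff.2 hj) i
  exact hsum.not_gt (sum_pos (fun i _ => hpos i) ⟨j, mem_univ j⟩)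

end OrderedRing

lemma exists_stationary_of_mem_colStochastic {K : Type*} [Field K] [LinearOrder K]
    [IsStrictOrderedRing K] [Nonempty ι] {A : Matrix ι ι K} (hA : A ∈ colStochastic K ι) :
    ∃ v : ι → K, 0 ≤ v ∧ ∑ i, v i = 1 ∧ A *ᵥ v = v := by
  obtain ⟨v, hv, hfix⟩ := exists_mulVec_eq_self_of_one_vecMul_eq_one hA.2
  obtain ⟨u, j, hj, hu⟩ : ∃ u : ι → K, ∃ j, 0 < u j ∧ A *ᵥ u = u := by
    obtain ⟨j, hj⟩ := Function.ne_iff.1 hv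
    rcases hj.lt_or_gt with hneg | hpos
    · exact ⟨-v, j, neg_pos.2 hneg, by rw [mulVec_neg, hfix]⟩
    · exact ⟨v, j, hpos, hfix⟩
  set s := ∑ i, u⁺ i
  have hs : 0 < s :=
    sum_pos' (fun i _ => posPart_nonneg (u i)) ⟨j, mem_univ j, posPart_pos_iff.2 hj⟩
  refine ⟨s⁻¹ • u⁺, smul_nonneg (inv_nonneg.2 hs.le) (posPart_nonneg u), ?_, ?_⟩
  · simp only [Pi.smul_apply, smul_eq_mul, ← mul_sum]
    exact inv_mul_cancel₀ hs.ne'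
  · rw [mulVec_smul, mulVec_posPart_eq_self_of_mem_colStochastic hA hu]

end Matrix

open Matrix in
/-- Perron–Frobenius theorem for column-stochastic irreducible matrices: there is a unique
probability vector `v` with `A.mulVec v = v`. -/
theorem colStochastic_irreducible_unique_stationary {n : ℕ} (hn : 0 < n)
    (A : Matrix (Fin n) (Fin n) ℝ)
    (hpos : ∀ i j, 0 ≤ A i j) (hcol : ∀ j, ∑ i, A i j = 1)
    (hirr : ∀ i j, ∃ k : ℕ, 0 < (A ^ k) i j) :
    ∃! v : Fin n → ℝ, (∀ i, 0 ≤ v i) ∧ (∑ i, v i = 1) ∧ A.mulVec v = v := by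
  have : Nonempty (Fin n) := ⟨⟨0, hn⟩⟩
  have hA : A ∈ colStochastic ℝ (Fin n) := mem_colStochastic_iff_sum.2 ⟨hpos, hcol⟩
  obtain ⟨v, hv_nonneg, hv_sum, hv_fix⟩ := exists_stationary_of_mem_colStochastic hA
  refine ⟨v, ⟨hv_nonneg, hv_sum, hv_fix⟩, fun w ⟨_, hw_sum, hw_fix⟩ => ?_⟩
  refine sub_eq_zero.1 (eq_zero_of_mulVec_eq_self_of_sum_eq_zero hA hirr ?_ ?_)
  · rw [mulVec_sub, hw_fix, hv_fix]
  · simp only [Pi.sub_apply, Finset.sum_sub_distrib, hw_sum, hv_sum, sub_self]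
end

section
/- Let W be the weight matrix and θ the threshold vector of a Boltzmann machine on n neurons with energy E, let T > 0, and let π be the Boltzmann distribution. The random-scan Gibbs transition matrix P(s, s') = (1/n) · ∑_{u} K_u(s, s'), viewed as a column-stochastic matrix on the finite state space {−1,1}^n, is irreducible, has strictly positive diagonal entries, and π is its unique stationary probability vector: P applied to π equals π, and any probability vector fixed by P equals π. -/
/-!
Each single-site kernel `K_u` is in detailed balance with the Boltzmann distribution `π`, because
the normalising denominator of `K_u(s, ·)` only depends on `s` off the site `u`; hence so is their
average `P`, and `π` is stationary. Every transition that flips at most one spin has positive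
probability, so `(P ^ k) s s' > 0` whenever the Hamming distance of `s` and `s'` is at most `k`;
in particular `P ^ n` is entrywise positive. For a positive matrix fixing the positive vector `π`,
comparing a fixed vector `ρ` with `c π`, where `c` is the least ratio `ρ s / π s`, shows that
`ρ = c π`, and normalisation forces `c = 1`.
-/

open Finset

noncomputable section

/-- The `{-1, 1}`-valued state corresponding to a Boolean configuration. -/
def toState {n : ℕ} (b : Fin n → Bool) : Fin n → ℝ :=
  fun u => if b u then 1 else -1

/-- The Boltzmann distribution at temperature `T` over the finite state space `{-1,1}^n`. -/
def boltzmann {n : ℕ} (W : Matrix (Fin n) (Fin n) ℝ) (θ : Fin n → ℝ) (T : ℝ)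
    (s : Fin n → Bool) : ℝ :=
  Real.exp (-energy W θ (toState s) / T) /
    ∑ s' : Fin n → Bool, Real.exp (-energy W θ (toState s') / T)

/-- The single-site Gibbs update kernel at neuron `u`: the transition probability from `s`
to `s'`, which is nonzero only when `s'` agrees with `s` off `u`. -/
def gibbsKernel {n : ℕ} (W : Matrix (Fin n) (Fin n) ℝ) (θ : Fin n → ℝ) (T : ℝ)
    (u : Fin n) (s s' : Fin n → Bool) : ℝ :=
  if ∀ v, v ≠ u → s' v = s v then
    Real.exp (-energy W θ (toState s') / T) /
      (Real.exp (-energy W θ (toState (Function.update s u true)) / T) +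
        Real.exp (-energy W θ (toState (Function.update s u false)) / T))
  else 0

/-- The random-scan Gibbs transition matrix, in the column-stochastic convention: the entry
at `(s', s)` is the probability `(1/n) ∑ u, K_u(s, s')` of transitioning from `s` to `s'`. -/
def randomScan {n : ℕ} (W : Matrix (Fin n) (Fin n) ℝ) (θ : Fin n → ℝ) (T : ℝ) :
    Matrix (Fin n → Bool) (Fin n → Bool) ℝ :=
  fun s' s => (1 / (n : ℝ)) * ∑ u, gibbsKernel W θ T u s s'

open Matrix

section FixedVector

variable {ι : Type*} [Fintype ι]

theorem Matrix.mulVec_eq_self_of_detailed_balance {K : Matrix ι ι ℝ} {π : ι → ℝ}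
    (hcol : ∀ j, ∑ i, K i j = 1) (hbal : ∀ i j, K i j * π j = K j i * π i) : K *ᵥ π = π := by
  funext i
  calc (K *ᵥ π) i = ∑ j, K j i * π i := sum_congr rfl fun j _ => hbal i j
    _ = π i := by rw [← sum_mul, hcol, one_mul]

theorem Matrix.pow_mulVec_eq_self_s19 [DecidableEq ι] {A : Matrix ι ι ℝ} {v : ι → ℝ}
    (h : A *ᵥ v = v) (k : ℕ) : (A ^ k) *ᵥ v = v := by
  induction k with
  | zero => exact one_mulVec v
  | succ k ih => rw [pow_succ, ← mulVec_mulVec, h, ih]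

theorem Matrix.eq_of_mulVec_eq_self_of_pos {A : Matrix ι ι ℝ} (hA : ∀ i j, 0 < A i j)
    {π ρ : ι → ℝ} (hπ : ∀ i, 0 < π i) (hAπ : A *ᵥ π = π) (hAρ : A *ᵥ ρ = ρ)
    (hsum : ∑ i, ρ i = ∑ i, π i) : ρ = π := by
  cases isEmpty_or_nonempty ι
  · exact Subsingleton.elim ρ π
  obtain ⟨i₀, hi₀⟩ := Finite.exists_min fun i => ρ i / π i
  set c := ρ i₀ / π i₀
  have hdiff_nonneg : ∀ i, 0 ≤ ρ i - c * π i := fun i => by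
    have := hi₀ i
    rw [le_div_iff₀ (hπ i)] at this
    linarith
  have hdiff_fixed : A *ᵥ (ρ - c • π) = ρ - c • π := by rw [mulVec_sub, mulVec_smul, hAρ, hAπ]
  have hdiff_zero : ∀ j, ρ j - c * π j = 0 := by
    have h := congrFun hdiff_fixed i₀
    simp only [mulVec, dotProduct, Pi.sub_apply, Pi.smul_apply, smul_eq_mul] at h
    rw [show ρ i₀ - c * π i₀ = 0 by simp [c, div_mul_cancel₀ _ (hπ i₀).ne'],
      sum_eq_zero_iff_of_nonneg fun j _ => mul_nonneg (hA i₀ j).le (hdiff_nonneg j)] at h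
    exact fun j => (mul_eq_zero.1 (h j (mem_univ j))).resolve_left (hA i₀ j).ne'
  have hc : c = 1 := by
    have h : c * ∑ i, π i = ∑ i, π i := by
      rw [mul_sum, ← hsum]
      exact sum_congr rfl fun i _ => by linarith [hdiff_zero i]
    exact (mul_eq_right₀ (sum_pos (fun i _ => hπ i) univ_nonempty).ne').1 h
  funext i
  simpa [hc, sub_eq_zero] using hdiff_zero i

end FixedVector

section Hamming

variable {ι β : Type*} [Fintype ι] [DecidableEq β]

theorem exists_forall_ne_eq_of_hammingDist_le_one [Nonempty ι] {x y : ι → β}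
    (h : hammingDist x y ≤ 1) : ∃ u, ∀ v, v ≠ u → x v = y v := by
  obtain ⟨u, hu⟩ := card_le_one_iff_subset_singleton.1 h
  exact ⟨u, fun v hv => by_contra fun hne => hv (mem_singleton.1 (hu (by simpa using hne)))⟩

theorem exists_hammingDist_le_one_and_le_of_le_succ [DecidableEq ι] {x y : ι → β} {k : ℕ}
    (h : hammingDist x y ≤ k + 1) : ∃ z, hammingDist x z ≤ 1 ∧ hammingDist z y ≤ k := by
  by_cases hxy : x = y
  · exact ⟨y, by simp [hxy]⟩
  obtain ⟨i, hi⟩ := Function.ne_iff.1 hxy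
  refine ⟨Function.update x i (y i), ?_, ?_⟩
  · refine (card_le_card fun j hj => ?_).trans (card_singleton i).le
    by_contra hji
    simp [Function.update_of_ne (mem_singleton.not.1 hji)] at hj
  · have hsub : ({j | Function.update x i (y i) j ≠ y j} : Finset ι) ⊆
        ({j | x j ≠ y j} : Finset ι).erase i := fun j hj => by
      by_cases hji : j = i
      · simp [hji] at hj
      · simpa [hji, Function.update_of_ne hji] using hj
    have := card_le_card hsub
    rw [card_erase_of_mem (by simpa using hi)] at this
    unfold hammingDist at h ⊢
    omega

theorem Matrix.pow_apply_pos_of_hammingDist_le [DecidableEq ι] [Fintype β]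
    {P : Matrix (ι → β) (ι → β) ℝ} (hP_nonneg : ∀ x y, 0 ≤ P x y)
    (hP_pos : ∀ x y, hammingDist x y ≤ 1 → 0 < P x y) (k : ℕ) :
    ∀ x y, hammingDist x y ≤ k → 0 < (P ^ k) x y := by
  induction k with
  | zero =>
    intro x y h
    simp [hammingDist_eq_zero.1 (Nat.le_zero.1 h)]
  | succ k ih =>
    intro x y h
    obtain ⟨z, hxz, hzy⟩ := exists_hammingDist_le_one_and_le_of_le_succ h
    rw [pow_succ', mul_apply]
    exact sum_pos' (fun w _ => mul_nonneg (hP_nonneg x w) (pow_apply_nonneg hP_nonneg k w y))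
      ⟨z, mem_univ z, mul_pos (hP_pos x z hxz) (ih z y hzy)⟩

end Hamming

section Boltzmann

variable {n : ℕ} {W : Matrix (Fin n) (Fin n) ℝ} {θ : Fin n → ℝ} {T : ℝ}

theorem boltzmann_pos (s : Fin n → Bool) : 0 < boltzmann W θ T s :=
  div_pos (Real.exp_pos _) (sum_pos (fun _ _ => Real.exp_pos _) univ_nonempty)

theorem sum_boltzmann : ∑ s, boltzmann W θ T s = 1 := by
  simp only [boltzmann]
  rw [← sum_div, div_self (sum_pos (fun _ _ => Real.exp_pos _) univ_nonempty).ne']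

theorem gibbsKernel_nonneg (u : Fin n) (s s' : Fin n → Bool) : 0 ≤ gibbsKernel W θ T u s s' := by
  unfold gibbsKernel
  split <;> positivity

theorem gibbsKernel_pos {u : Fin n} {s s' : Fin n → Bool} (h : ∀ v, v ≠ u → s' v = s v) :
    0 < gibbsKernel W θ T u s s' := by
  rw [gibbsKernel, if_pos h]
  positivity

theorem sum_gibbsKernel (u : Fin n) (s : Fin n → Bool) : ∑ s', gibbsKernel W θ T u s s' = 1 := by
  have hfilter : ({s' | ∀ v, v ≠ u → s' v = s v} : Finset (Fin n → Bool)) =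
      univ.image (Function.update s u) := by
    ext s'
    simp only [mem_filter, mem_univ, true_and, mem_image, Function.update_eq_iff]
    exact ⟨fun h => ⟨s' u, rfl, fun v hv => (h v hv).symm⟩, fun ⟨_, _, h⟩ v hv => (h v hv).symm⟩
  unfold gibbsKernel
  rw [sum_ite, sum_const_zero, add_zero, hfilter,
    sum_image fun a _ b _ h => Function.update_injective s u h, Fintype.sum_bool, ← add_div,
    div_self (by positivity)]

theorem gibbsKernel_mul_boltzmann_comm (u : Fin n) (s s' : Fin n → Bool) :
    gibbsKernel W θ T u s s' * boltzmann W θ T s =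
      gibbsKernel W θ T u s' s * boltzmann W θ T s' := by
  by_cases h : ∀ v, v ≠ u → s' v = s v
  · have hupdate : ∀ b, Function.update s u b = Function.update s' u b := fun b =>
      Function.update_eq_iff.2 ⟨by simp, fun v hv => by simp [hv, h v hv]⟩
    rw [gibbsKernel, gibbsKernel, if_pos h, if_pos fun v hv => (h v hv).symm, hupdate, hupdate,
      boltzmann, boltzmann]
    ring
  · rw [gibbsKernel, gibbsKernel, if_neg h, if_neg fun h' => h fun v hv => (h' v hv).symm,
      zero_mul, zero_mul]

theorem randomScan_nonneg (s' s : Fin n → Bool) : 0 ≤ randomScan W θ T s' s :=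
  mul_nonneg (by positivity) (sum_nonneg fun u _ => gibbsKernel_nonneg u s s')

theorem randomScan_pos_of_hammingDist_le_one [NeZero n] {s' s : Fin n → Bool}
    (h : hammingDist s' s ≤ 1) : 0 < randomScan W θ T s' s := by
  obtain ⟨u, hu⟩ := exists_forall_ne_eq_of_hammingDist_le_one h
  exact mul_pos (one_div_pos.2 (Nat.cast_pos.2 (Nat.pos_of_neZero n)))
    (sum_pos' (fun v _ => gibbsKernel_nonneg v s s') ⟨u, mem_univ u, gibbsKernel_pos hu⟩)

theorem randomScan_pow_pos [NeZero n] (s s' : Fin n → Bool) : 0 < (randomScan W θ T ^ n) s s' :=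
  pow_apply_pos_of_hammingDist_le randomScan_nonneg
    (fun _ _ => randomScan_pos_of_hammingDist_le_one) n s s'
    (hammingDist_le_card_fintype.trans_eq (Fintype.card_fin n))

theorem sum_randomScan [NeZero n] (s : Fin n → Bool) : ∑ s', randomScan W θ T s' s = 1 := by
  simp only [randomScan]
  rw [← mul_sum, sum_comm]
  simp only [sum_gibbsKernel, sum_const, card_univ, Fintype.card_fin, nsmul_eq_mul, mul_one]
  exact one_div_mul_cancel (NeZero.ne _)

theorem randomScan_mul_boltzmann_comm (s' s : Fin n → Bool) :
    randomScan W θ T s' s * boltzmann W θ T s = randomScan W θ T s s' * boltzmann W θ T s' := by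
  simp only [randomScan, mul_assoc, sum_mul]
  rw [sum_congr rfl fun u _ => gibbsKernel_mul_boltzmann_comm u s s']

theorem randomScan_mulVec_boltzmann [NeZero n] :
    randomScan W θ T *ᵥ boltzmann W θ T = boltzmann W θ T :=
  mulVec_eq_self_of_detailed_balance sum_randomScan randomScan_mul_boltzmann_comm

end Boltzmann

theorem randomScan_ergodic_unique_invariant_general {n : ℕ} (hn : 2 ≤ n)
    (W : Matrix (Fin n) (Fin n) ℝ)
    (θ : Fin n → ℝ) (T : ℝ) :
    (∀ s s' : Fin n → Bool, ∃ k : ℕ, 0 < ((randomScan W θ T) ^ k) s s') ∧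
      (∀ s : Fin n → Bool, 0 < randomScan W θ T s s) ∧
      (randomScan W θ T).mulVec (boltzmann W θ T) = boltzmann W θ T ∧
      (∀ ρ : (Fin n → Bool) → ℝ, (∀ s, 0 ≤ ρ s) → (∑ s, ρ s = 1) →
        (randomScan W θ T).mulVec ρ = ρ → ρ = boltzmann W θ T) := by
  have : NeZero n := ⟨by omega⟩
  refine ⟨fun s s' => ⟨n, randomScan_pow_pos s s'⟩,
    fun s => randomScan_pos_of_hammingDist_le_one (by simp), randomScan_mulVec_boltzmann,
    fun ρ _ hρ_sum hρ_fixed => ?_⟩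
  exact eq_of_mulVec_eq_self_of_pos randomScan_pow_pos boltzmann_pos
    (pow_mulVec_eq_self_s19 randomScan_mulVec_boltzmann n) (pow_mulVec_eq_self_s19 hρ_fixed n)
    (by rw [hρ_sum, sum_boltzmann])

/-- Ergodicity of the random-scan Gibbs dynamics of a Boltzmann machine: the random-scan
matrix is irreducible, has strictly positive diagonal, and the Boltzmann distribution is its
unique stationary probability vector. -/
theorem randomScan_ergodic_unique_invariant {n : ℕ} (hn : 2 ≤ n)
    (W : Matrix (Fin n) (Fin n) ℝ) (hsymm : W.IsSymm) (hdiag : ∀ u, W u u = 0)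
    (θ : Fin n → ℝ) (T : ℝ) (hT : 0 < T) :
    (∀ s s' : Fin n → Bool, ∃ k : ℕ, 0 < ((randomScan W θ T) ^ k) s s') ∧
      (∀ s : Fin n → Bool, 0 < randomScan W θ T s s) ∧
      (randomScan W θ T).mulVec (boltzmann W θ T) = boltzmann W θ T ∧
      (∀ ρ : (Fin n → Bool) → ℝ, (∀ s, 0 ≤ ρ s) → (∑ s, ρ s = 1) →
        (randomScan W θ T).mulVec ρ = ρ → ρ = boltzmann W θ T) :=
  randomScan_ergodic_unique_invariant_general hn W θ T
end
end
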